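/- Let K be an odd positive integer and let m be an odd integer with 1 ≤ m ≤ K. For l ∈ {0,…,K} define h(l) = (1/C(K,m)) · Σ_{j=(m+1)/2}^{m} C(l,j)·C(K−l, m−j), and define γ_Sub : {0,…,K} → ℝ by γ_Sub(l) = 1 − 2h(l) for l ≤ (K−1)/2 and γ_Sub(l) = 1 − 2h(K−l) for l ≥ (K+1)/2. Then for every l ∈ {0,…,K}, γ_Sub(l)·1{l ≥ (K+1)/2} + (1 − γ_Sub(l))/2 = h(l). (In particular γ_Sub(l) = γ_Sub(K−l) for all l, and hence data-dependent randomized response with noise function γ_Sub, which outputs the majority indicator 1{l ≥ (K+1)/2} with probability γ_Sub(l) and a fair coin otherwise, has exactly probability h(l) of outputting 1 conditioned on the sum of observed outcomes being l — the same as outputting the majority of m outcomes subsampled without replacement.) -/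

import Mathlib

/-!
By Vandermonde's identity the `m`-subsets with a majority of ones and those with a majority of
zeros together exhaust all `C(K, m)` subsets (`m` is odd, so there are no ties). Hence
`h l + h (K - l) = 1`, which is exactly what the case `l ≥ (K + 1) / 2` requires; the other case
is immediate from the definition of `γ_Sub`.
-/

open Finset

def majorityCount (a b m : ℕ) : ℕ :=
  ∑ j ∈ Icc ((m + 1) / 2) m, a.choose j * b.choose (m - j)

/-- Reflecting `j ↦ m - j` turns a majority of ones into a minority; `m` odd rules out ties. -/
lemma majorityCount_swap {m : ℕ} (a b : ℕ) (hm : Odd m) :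
    majorityCount b a m = ∑ j ∈ range ((m + 1) / 2), a.choose j * b.choose (m - j) := by
  obtain ⟨t, rfl⟩ := hm
  refine sum_nbij' (fun j => 2 * t + 1 - j) (fun j => 2 * t + 1 - j) ?_ ?_ ?_ ?_ fun j hj => ?_
  all_goals try (intro j hj; simp only [mem_Icc, mem_range] at hj ⊢; omega)
  rw [Nat.sub_sub_self (mem_Icc.mp hj).2, mul_comm]

lemma majorityCount_add_majorityCount_swap {m : ℕ} (a b : ℕ) (hm : Odd m) :
    majorityCount a b m + majorityCount b a m = (a + b).choose m := by
  rw [majorityCount_swap a b hm, add_comm, majorityCount, ← Ico_add_one_right_eq_Icc,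
    sum_range_add_sum_Ico _ (by omega), Nat.add_choose_eq,
    Nat.sum_antidiagonal_eq_sum_range_succ_mk]
  rfl

theorem statement0 (K m : ℕ)
    (hm : Odd m) (hmK : m ≤ K)
    (h γSub : ℕ → ℝ)
    (hh : ∀ l, h l = (∑ j ∈ Finset.Icc ((m + 1) / 2) m,
        (l.choose j : ℝ) * ((K - l).choose (m - j) : ℝ)) / (K.choose m : ℝ))
    (hγlo : ∀ l, l ≤ (K - 1) / 2 → γSub l = 1 - 2 * h l)
    (hγhi : ∀ l, (K + 1) / 2 ≤ l → γSub l = 1 - 2 * h (K - l)) :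
    ∀ l ≤ K, γSub l * (if (K + 1) / 2 ≤ l then (1 : ℝ) else 0)
      + (1 - γSub l) / 2 = h l := by
  intro l hl
  have h_eq : ∀ l, h l = majorityCount l (K - l) m / K.choose m := by
    intro l
    rw [hh l, majorityCount]
    push_cast
    rfl
  have hsymm : h l + h (K - l) = 1 := by
    have hC : (K.choose m : ℝ) ≠ 0 := by exact_mod_cast (Nat.choose_pos hmK).ne'
    have hsplit := majorityCount_add_majorityCount_swap l (K - l) hm
    rw [Nat.add_sub_cancel' hl] at hsplit
    rw [h_eq, h_eq, Nat.sub_sub_self hl, ← add_div, div_eq_one_iff_eq hC]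
    exact_mod_cast hsplit
  split_ifs with hhi
  · rw [hγhi l hhi]
    linarith
  · rw [hγlo l (by omega)]
    ring
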